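/- arXiv:1404.6857 — 11 statements merged into one kernel-verified Lean document; each statement's English description precedes it below -/
import Mathlib

section
/- Let D = Dⁿ ∪ Dˣ be a database instance, Q a monotone Boolean query with ¬Q(∅), and t ∉ D a fresh tuple. Then CS(Dⁿ, Dˣ, Q) ⊆ CS(Dⁿ ∪ {t}, Dˣ, Q); that is, every actual cause for Q in D remains an actual cause after t is inserted as an endogenous tuple. (Proposition 1(a).) -/
/-- `t` is an actual cause for query `Q` in instance `D` with endogenous part `Dn`:
there is a contingency set `Γ ⊆ Dn` not containing `t` such that `D ∖ Γ ⊨ Q`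
and `D ∖ (Γ ∪ {t}) ⊭ Q`. -/
def IsCause {U : Type*} [DecidableEq U] (D Dn : Finset U) (Q : Finset U → Prop) (t : U) : Prop :=
  t ∈ Dn ∧ ∃ Γ ⊆ Dn, t ∉ Γ ∧ Q (D \ Γ) ∧ ¬ Q (D \ insert t Γ)

/-!
A contingency set `Γ` witnessing that `u` is a cause in `D` becomes `Γ ∪ {t}` in `D ∪ {t}`:
as `t ∉ D`, removing `Γ ∪ {t}` (resp. `Γ ∪ {t, u}`) from `D ∪ {t}` leaves exactly `D ∖ Γ`
(resp. `D ∖ (Γ ∪ {u})`), so both query tests are unchanged.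
-/

namespace Finset

theorem insert_sdiff_insert_of_notMem {α : Type*} [DecidableEq α] {t : α} {D : Finset α}
    (ht : t ∉ D) (Γ : Finset α) : insert t D \ insert t Γ = D \ Γ := by
  rw [insert_sdiff_insert, sdiff_insert_of_notMem ht]

end Finset

namespace IsCause

variable {U : Type*} [DecidableEq U] {D Dn : Finset U} {Q : Finset U → Prop} {t u : U}

theorem ne_of_notMem (hu : IsCause D Dn Q u) (ht : t ∉ D) : u ≠ t := by
  rintro rfl
  obtain ⟨-, Γ, -, -, hQ, hnQ⟩ := hu
  exact hnQ (by rwa [Finset.sdiff_insert_of_notMem ht])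

theorem insert_of_notMem (hu : IsCause D Dn Q u) (ht : t ∉ D) :
    IsCause (insert t D) (insert t Dn) Q u := by
  have hut := hu.ne_of_notMem ht
  obtain ⟨huDn, Γ, hΓ, huΓ, hQ, hnQ⟩ := hu
  refine ⟨Finset.mem_insert_of_mem huDn, insert t Γ, Finset.insert_subset_insert t hΓ,
    by simp [hut, huΓ], ?_, ?_⟩
  · rwa [Finset.insert_sdiff_insert_of_notMem ht]
  · rwa [Finset.insert_comm, Finset.insert_sdiff_insert_of_notMem ht]

end IsCause

theorem causes_mono_endogenous_insertion_general
    {U : Type*} [DecidableEq U] (Dn Dx : Finset U) (Q : Finset U → Prop)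
    (t : U) (ht : t ∉ Dn ∪ Dx) :
    ∀ u, IsCause (Dn ∪ Dx) Dn Q u → IsCause (insert t Dn ∪ Dx) (insert t Dn) Q u := by
  intro u hu
  rw [Finset.insert_union]
  exact hu.insert_of_notMem ht

/-- Proposition 1(a): inserting a fresh endogenous tuple preserves actual causes. -/
theorem causes_mono_endogenous_insertion
    {U : Type*} [DecidableEq U] (Dn Dx : Finset U) (Q : Finset U → Prop)
    (hmono : ∀ S S' : Finset U, S ⊆ S' → Q S → Q S')
    (hempty : ¬ Q ∅)
    (hdisj : Disjoint Dn Dx)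
    (t : U) (ht : t ∉ Dn ∪ Dx) :
    ∀ u, IsCause (Dn ∪ Dx) Dn Q u → IsCause (insert t Dn ∪ Dx) (insert t Dn) Q u :=
  causes_mono_endogenous_insertion_general Dn Dx Q t ht
end

section
/- Both inclusions of Proposition 1 can be strict: (i) there exist a type U, a monotone Boolean query Q with ¬Q(∅), a partitioned instance D = Dⁿ ∪ Dˣ, and a tuple t ∉ D such that CS(Dⁿ, Dˣ, Q) ⊊ CS(Dⁿ ∪ {t}, Dˣ, Q); and (ii) there exist such data with CS(Dⁿ, Dˣ ∪ {t}, Q) ⊊ CS(Dⁿ, Dˣ, Q). -/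
section

variable {U : Type*} [DecidableEq U] {D Dn : Finset U} {Q : Finset U → Prop} {t : U}

theorem isCause_of_counterfactual (ht : t ∈ Dn) (hD : Q D) (hDt : ¬ Q (D.erase t)) :
    IsCause D Dn Q t :=
  ⟨ht, ∅, Finset.empty_subset _, Finset.notMem_empty t, by simpa using hD,
    by simpa [Finset.sdiff_singleton_eq_erase] using hDt⟩

theorem causes_endogenous_empty : {u | IsCause D ∅ Q u} = ∅ :=
  Set.eq_empty_of_forall_notMem fun u hu => Finset.notMem_empty u hu.1

theorem causes_eq_empty_of_exogenous (hQ : Monotone Q) (hx : Q (D \ Dn)) :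
    {u | IsCause D Dn Q u} = ∅ :=
  Set.eq_empty_of_forall_notMem fun _ ⟨hu, _, hΓ, _, _, hfalsified⟩ =>
    hfalsified <| hQ (Finset.sdiff_subset_sdiff le_rfl (Finset.insert_subset hu hΓ)) hx

end

/-- Both inclusions of Proposition 1 can be strict. -/
theorem causes_inclusions_can_be_strict :
    (∃ (U : Type) (_ : DecidableEq U) (Q : Finset U → Prop) (Dn Dx : Finset U) (t : U),
      (∀ S S' : Finset U, S ⊆ S' → Q S → Q S') ∧ ¬ Q ∅ ∧
      Disjoint Dn Dx ∧ t ∉ Dn ∪ Dx ∧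
      {u | IsCause (Dn ∪ Dx) Dn Q u} ⊂ {u | IsCause (insert t Dn ∪ Dx) (insert t Dn) Q u}) ∧
    (∃ (U : Type) (_ : DecidableEq U) (Q : Finset U → Prop) (Dn Dx : Finset U) (t : U),
      (∀ S S' : Finset U, S ⊆ S' → Q S → Q S') ∧ ¬ Q ∅ ∧
      Disjoint Dn Dx ∧ t ∉ Dn ∪ Dx ∧
      {u | IsCause (Dn ∪ insert t Dx) Dn Q u} ⊂ {u | IsCause (Dn ∪ Dx) Dn Q u}) := by
  have hmono : Monotone (Finset.Nonempty : Finset Bool → Prop) := fun _ _ h hS => hS.mono h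
  refine ⟨⟨Bool, inferInstance, Finset.Nonempty, ∅, ∅, true, hmono, by simp, by simp, by simp, ?_⟩,
    ⟨Bool, inferInstance, Finset.Nonempty, {false}, ∅, true, hmono, by simp, by simp, by simp, ?_⟩⟩
  · rw [causes_endogenous_empty, Set.empty_ssubset]
    exact ⟨true, isCause_of_counterfactual (by simp) (by simp) (by simp)⟩
  · rw [causes_eq_empty_of_exogenous hmono (by decide), Set.empty_ssubset]
    exact ⟨false, isCause_of_counterfactual (by simp) (by simp) (by simp)⟩
end

section
/- Let D = Dⁿ ∪ Dˣ be a database instance, Q a monotone Boolean query with ¬Q(∅), and t ∈ Dⁿ. Every s ∈ DF(D, Dⁿ, κ(Q), t) can be written as s = s′ ∪ {t} where s′ = s∖{t} satisfies D∖(s′∪{t}) ⊭ Q and D∖s′ ⊨ Q; in particular, t is an actual cause for Q with contingency set s∖{t}. -/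
/-- `D'` is an S-repair of `D` w.r.t. the denial constraint `κ(Q)`:
a subset of `D` not satisfying `Q`, maximal under inclusion among such subsets. -/
def IsSRepair {U : Type*} [DecidableEq U] (D : Finset U) (Q : Finset U → Prop)
    (D' : Finset U) : Prop :=
  D' ⊆ D ∧ ¬ Q D' ∧ ∀ D'' ⊆ D, ¬ Q D'' → D' ⊆ D'' → D'' = D'

/-- `DF(D, Dⁿ, κ(Q), t)`: differences `D ∖ D'` for S-repairs `D'` with `t ∈ D ∖ D' ⊆ Dⁿ`. -/
def DF {U : Type*} [DecidableEq U] (D Dn : Finset U) (Q : Finset U → Prop) (t : U) :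
    Set (Finset U) :=
  { s | ∃ D', IsSRepair D Q D' ∧ s = D \ D' ∧ t ∈ s ∧ s ⊆ Dn }

/-!
If `s = D ∖ D'` for an S-repair `D'` and `t ∈ s`, then removing `s ∖ {t}` from `D` leaves
`D' ∪ {t}`, which satisfies `Q` by maximality of `D'`, while removing all of `s` leaves
`D' ⊭ Q`. So `s ∖ {t}` is a contingency set for `t`.
-/

namespace IsSRepair

variable {U : Type*} [DecidableEq U] {D D' : Finset U} {Q : Finset U → Prop}

theorem sdiff_sdiff (h : IsSRepair D Q D') : D \ (D \ D') = D' :=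
  Finset.sdiff_sdiff_eq_self h.1

theorem query_insert (h : IsSRepair D Q D') {t : U} (htD : t ∈ D) (htD' : t ∉ D') :
    Q (insert t D') := by
  by_contra hnQ
  have heq := h.2.2 (insert t D') (Finset.insert_subset htD h.1) hnQ (Finset.subset_insert _ _)
  exact htD' (heq ▸ Finset.mem_insert_self t D')

end IsSRepair

theorem DF.query_sdiff_erase {U : Type*} [DecidableEq U] {D Dn : Finset U}
    {Q : Finset U → Prop} {t : U} {s : Finset U} (hs : s ∈ DF D Dn Q t) :
    Q (D \ s.erase t) ∧ ¬ Q (D \ s) := by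
  obtain ⟨D', hrep, rfl, hts, -⟩ := hs
  have htD : t ∈ D := (Finset.mem_sdiff.mp hts).1
  rw [Finset.sdiff_erase htD, hrep.sdiff_sdiff]
  exact ⟨hrep.query_insert htD (Finset.mem_sdiff.mp hts).2, hrep.2.1⟩

theorem DF_gives_causes_general
    {U : Type*} [DecidableEq U] (D Dn : Finset U) (Q : Finset U → Prop)
    (t : U)
    (s : Finset U) (hs : s ∈ DF D Dn Q t) :
    s = insert t (s.erase t) ∧ s.erase t ⊆ Dn ∧ t ∉ s.erase t ∧
      Q (D \ s.erase t) ∧ ¬ Q (D \ insert t (s.erase t)) ∧ IsCause D Dn Q t := by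
  obtain ⟨hQ, hnQ⟩ := DF.query_sdiff_erase hs
  obtain ⟨-, -, -, hts, hsDn⟩ := hs
  have hs_eq : s = insert t (s.erase t) := (Finset.insert_erase hts).symm
  have hsub : s.erase t ⊆ Dn := (Finset.erase_subset t s).trans hsDn
  rw [hs_eq] at hnQ
  exact ⟨hs_eq, hsub, Finset.notMem_erase t s, hQ, hnQ,
    hsDn hts, s.erase t, hsub, Finset.notMem_erase t s, hQ, hnQ⟩

/-- Every `s ∈ DF(D, Dⁿ, κ(Q), t)` has the form `s' ∪ {t}` with `s' = s ∖ {t}` a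
contingency set witnessing that `t` is an actual cause for `Q`. -/
theorem DF_gives_causes
    {U : Type*} [DecidableEq U] (D Dn Dx : Finset U) (Q : Finset U → Prop)
    (hD : D = Dn ∪ Dx) (hdisj : Disjoint Dn Dx)
    (hmono : ∀ S S' : Finset U, S ⊆ S' → Q S → Q S')
    (hempty : ¬ Q ∅)
    (t : U) (ht : t ∈ Dn)
    (s : Finset U) (hs : s ∈ DF D Dn Q t) :
    s = insert t (s.erase t) ∧ s.erase t ⊆ Dn ∧ t ∉ s.erase t ∧
      Q (D \ s.erase t) ∧ ¬ Q (D \ insert t (s.erase t)) ∧ IsCause D Dn Q t :=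
  DF_gives_causes_general D Dn Q t s hs
end

section
/- Let D = Dⁿ ∪ Dˣ be a database instance, Q a monotone Boolean query with ¬Q(∅), and t ∈ Dⁿ. (1) If DF(D, Dⁿ, κ(Q), t) = ∅, then ρ(t) = 0. (2) Otherwise, ρ(t) = 1/|s|, where s is any element of DF(D, Dⁿ, κ(Q), t) of minimum cardinality (i.e., no s′ ∈ DF(D, Dⁿ, κ(Q), t) has |s′| < |s|). (Proposition 3.) -/
/-!
Minimal contingency sets and minimal repair differences correspond. A contingency set `Γ`
for `t` makes `D ∖ (Γ ∪ {t})` violate `Q`; extending it to an S-repair `D'` keeps `t` out of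
`D'` (by monotonicity, since `D ∖ Γ` satisfies `Q`), so `D ∖ D' ∈ DF` and `|D ∖ D'| ≤ |Γ| + 1`.
Conversely, for `D ∖ D' ∈ DF`, the set `(D ∖ D') ∖ {t}` is a contingency set: removing it leaves
`D' ∪ {t}`, which satisfies `Q` by maximality of `D'`. Hence the minimum contingency size is
`|s| - 1` for a cardinality-minimum `s ∈ DF`, and there is no contingency set when `DF` is empty.
-/

open Classical

/-- The responsibility `ρ(t)`: `1/(1+m)` for `m` the minimum cardinality of a
contingency set for `t`, and `0` if `t` is not an actual cause. -/
noncomputable def resp {U : Type*} [DecidableEq U] (D Dn : Finset U) (Q : Finset U → Prop)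
    (t : U) : ℚ :=
  if IsCause D Dn Q t then
    1 / ((sInf { n : ℕ | ∃ Γ ⊆ Dn, t ∉ Γ ∧ Q (D \ Γ) ∧ ¬ Q (D \ insert t Γ) ∧ Γ.card = n }
      : ℕ) + 1)
  else 0

section

variable {U : Type*} [DecidableEq U] {D Dn : Finset U} {Q : Finset U → Prop} {t : U}

theorem IsSRepair.exists_superset {A : Finset U} (hA : A ⊆ D) (hQA : ¬ Q A) :
    ∃ D', IsSRepair D Q D' ∧ A ⊆ D' := by
  have hfin : {B : Finset U | B ⊆ D ∧ ¬ Q B}.Finite :=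
    D.powerset.finite_toSet.subset fun B hB => Finset.mem_powerset.2 hB.1
  obtain ⟨D', hAD', ⟨hD'D, hQD'⟩, hmax⟩ := hfin.exists_le_maximal ⟨hA, hQA⟩
  exact ⟨D', ⟨hD'D, hQD', fun D'' hD'' hQD'' hle => (hmax ⟨hD'', hQD''⟩ hle).antisymm hle⟩, hAD'⟩

theorem IsSRepair.query_insert_s5 {D' : Finset U} (h : IsSRepair D Q D') (htD : t ∈ D)
    (htD' : t ∉ D') : Q (insert t D') := by
  by_contra hQ
  have heq := h.2.2 _ (Finset.insert_subset htD h.1) hQ (Finset.subset_insert t D')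
  exact htD' (heq ▸ Finset.mem_insert_self t D')

theorem mem_of_query_sdiff_of_not_query_sdiff_insert {Γ : Finset U} (hQ : Q (D \ Γ))
    (hnQ : ¬ Q (D \ insert t Γ)) : t ∈ D := by
  by_contra htD
  exact hnQ (Finset.sdiff_insert_of_notMem htD Γ ▸ hQ)

theorem exists_mem_DF_subset_insert (hmono : Monotone Q) (ht : t ∈ Dn) {Γ : Finset U}
    (hΓ : Γ ⊆ Dn) (hQ : Q (D \ Γ)) (hnQ : ¬ Q (D \ insert t Γ)) :
    ∃ s ∈ DF D Dn Q t, s ⊆ insert t Γ := by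
  have htD := mem_of_query_sdiff_of_not_query_sdiff_insert hQ hnQ
  obtain ⟨D', hrep, hD'⟩ := IsSRepair.exists_superset Finset.sdiff_subset hnQ
  have hsub : D \ D' ⊆ insert t Γ := sdiff_le_comm.1 hD'
  have hcover : D \ Γ ⊆ insert t (D \ insert t Γ) := by
    simpa only [Finset.sdiff_insert] using Finset.insert_erase_subset t (D \ Γ)
  have htD' : t ∉ D' := fun htD' =>
    hrep.2.1 (hmono (hcover.trans (Finset.insert_subset htD' hD')) hQ)
  exact ⟨D \ D', ⟨D', hrep, rfl, Finset.mem_sdiff.2 ⟨htD, htD'⟩,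
    hsub.trans (Finset.insert_subset ht hΓ)⟩, hsub⟩

theorem contingency_of_mem_DF {s : Finset U} (hs : s ∈ DF D Dn Q t) :
    s.erase t ⊆ Dn ∧ t ∉ s.erase t ∧ Q (D \ s.erase t) ∧ ¬ Q (D \ insert t (s.erase t)) := by
  obtain ⟨D', hrep, rfl, hts, hsDn⟩ := hs
  obtain ⟨htD, htD'⟩ := Finset.mem_sdiff.1 hts
  have hcompl : D \ (D \ D').erase t = insert t D' := by
    ext x
    have := @hrep.1 x
    simp only [Finset.mem_sdiff, Finset.mem_erase, Finset.mem_insert]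
    grind
  refine ⟨(Finset.erase_subset t _).trans hsDn, Finset.notMem_erase t _, ?_, ?_⟩
  · exact hcompl ▸ hrep.query_insert_s5 htD htD'
  · rw [Finset.insert_erase hts, Finset.sdiff_sdiff_eq_self hrep.1]
    exact hrep.2.1

theorem isLeast_contingency_card (hmono : Monotone Q) {s : Finset U} (hs : s ∈ DF D Dn Q t)
    (hmin : ∀ s' ∈ DF D Dn Q t, ¬ s'.card < s.card) :
    IsLeast { n : ℕ | ∃ Γ ⊆ Dn, t ∉ Γ ∧ Q (D \ Γ) ∧ ¬ Q (D \ insert t Γ) ∧ Γ.card = n }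
      (s.erase t).card := by
  obtain ⟨hΓ, htΓ, hQ, hnQ⟩ := contingency_of_mem_DF hs
  obtain ⟨-, -, -, hts, hsDn⟩ := hs
  refine ⟨⟨_, hΓ, htΓ, hQ, hnQ, rfl⟩, ?_⟩
  rintro _ ⟨Γ, hΓ', -, hQ', hnQ', rfl⟩
  obtain ⟨s', hs', hs'Γ⟩ := exists_mem_DF_subset_insert hmono (hsDn hts) hΓ' hQ' hnQ'
  have := not_lt.1 (hmin s' hs')
  have := Finset.card_le_card hs'Γ
  have := Finset.card_insert_le t Γ
  have := Finset.card_erase_add_one hts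
  omega

theorem resp_eq_of_isLeast (ht : t ∈ Dn) {m : ℕ}
    (hm : IsLeast { n : ℕ | ∃ Γ ⊆ Dn, t ∉ Γ ∧ Q (D \ Γ) ∧ ¬ Q (D \ insert t Γ) ∧ Γ.card = n } m) :
    resp D Dn Q t = 1 / (m + 1) := by
  obtain ⟨Γ, hΓ, htΓ, hQ, hnQ, -⟩ := hm.1
  rw [resp, if_pos ⟨ht, Γ, hΓ, htΓ, hQ, hnQ⟩, hm.csInf_eq]

end

theorem responsibility_from_DF_general
    {U : Type*} [DecidableEq U] (D Dn : Finset U) (Q : Finset U → Prop)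
    (hmono : ∀ S S' : Finset U, S ⊆ S' → Q S → Q S')
    (t : U) :
    (DF D Dn Q t = ∅ → resp D Dn Q t = 0) ∧
    (∀ s ∈ DF D Dn Q t, (∀ s' ∈ DF D Dn Q t, ¬ s'.card < s.card) →
      resp D Dn Q t = 1 / (s.card : ℚ)) := by
  have hmono' : Monotone Q := fun S S' => hmono S S'
  constructor
  · intro hDF
    refine if_neg ?_
    rintro ⟨ht, Γ, hΓ, -, hQ, hnQ⟩
    obtain ⟨s, hs, -⟩ := exists_mem_DF_subset_insert hmono' ht hΓ hQ hnQ
    exact Set.eq_empty_iff_forall_notMem.1 hDF s hs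
  · intro s hs hmin
    have ⟨_, _, _, hts, hsDn⟩ := hs
    rw [resp_eq_of_isLeast (hsDn hts) (isLeast_contingency_card hmono' hs hmin),
      ← Finset.card_erase_add_one hts]
    norm_cast

/-- Proposition 3: responsibility from repair differences. If `DF(D,Dⁿ,κ(Q),t) = ∅` then
`ρ(t) = 0`; otherwise `ρ(t) = 1/|s|` for any cardinality-minimum `s ∈ DF(D,Dⁿ,κ(Q),t)`. -/
theorem responsibility_from_DF
    {U : Type*} [DecidableEq U] (D Dn Dx : Finset U) (Q : Finset U → Prop)
    (hD : D = Dn ∪ Dx) (hdisj : Disjoint Dn Dx)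
    (hmono : ∀ S S' : Finset U, S ⊆ S' → Q S → Q S')
    (hempty : ¬ Q ∅)
    (t : U) (ht : t ∈ Dn) :
    (DF D Dn Q t = ∅ → resp D Dn Q t = 0) ∧
    (∀ s ∈ DF D Dn Q t, (∀ s' ∈ DF D Dn Q t, ¬ s'.card < s.card) →
      resp D Dn Q t = 1 / (s.card : ℚ)) :=
  responsibility_from_DF_general D Dn Q hmono t
end

section
/- Let D be a database instance in which all tuples are endogenous and Q a monotone Boolean query with ¬Q(∅). Then D is consistent w.r.t. the denial constraint κ(Q) (i.e., D ⊭ Q) if and only if CS(D, ∅, Q) = ∅, i.e., there is no actual cause for Q in D. (Proposition 4(a).) -/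
section

variable {U : Type*} [DecidableEq U] {D Dn S : Finset U} {Q : Finset U → Prop} {t : U}

theorem IsCause.query_of_monotone (hQ : Monotone Q) (h : IsCause D Dn Q t) : Q D := by
  obtain ⟨-, Γ, -, -, hQΓ, -⟩ := h
  exact hQ Finset.sdiff_subset hQΓ

theorem isCause_of_minimal (hSD : S ⊆ D) (hS : Minimal Q S) (ht : t ∈ S) : IsCause D D Q t := by
  refine ⟨hSD ht, D \ S, Finset.sdiff_subset, fun h => (Finset.mem_sdiff.mp h).2 ht, ?_, ?_⟩
  · exact (Finset.sdiff_sdiff_eq_self hSD).symm ▸ hS.prop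
  · rw [Finset.sdiff_insert, Finset.sdiff_sdiff_eq_self hSD]
    exact hS.not_prop_of_lt (Finset.erase_ssubset ht)

theorem exists_isCause_of_query (hD : Q D) (hempty : ¬ Q ∅) : ∃ t, IsCause D D Q t := by
  obtain ⟨S, hSD, hS⟩ := exists_minimal_le_of_wellFoundedLT Q D hD
  obtain ⟨t, ht⟩ : S.Nonempty :=
    Finset.nonempty_iff_ne_empty.mpr fun hS0 => hempty (hS0 ▸ hS.prop)
  exact ⟨t, isCause_of_minimal hSD hS ht⟩

end

/-- Proposition 4(a): with all tuples endogenous, `D` is consistent w.r.t. `κ(Q)`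
(i.e. `D ⊭ Q`) iff there is no actual cause for `Q` in `D`. -/
theorem consistent_iff_no_causes
    {U : Type*} [DecidableEq U] (D : Finset U) (Q : Finset U → Prop)
    (hmono : ∀ S S' : Finset U, S ⊆ S' → Q S → Q S')
    (hempty : ¬ Q ∅) :
    ¬ Q D ↔ ∀ t, ¬ IsCause D D Q t := by
  exact ⟨fun hD t ht => hD (ht.query_of_monotone fun S S' h => hmono S S' h),
    fun hno hD => (exists_isCause_of_query hD hempty).elim hno⟩
end

section
/- Let D be a database instance in which all tuples are endogenous and Q a monotone Boolean query with ¬Q(∅). If t ∈ CS(D, ∅, Q) and s ∈ CT(D, D, Q, t), then D∖(s ∪ {t}) is an S-repair of D w.r.t. κ(Q). -/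
/-- `CT(D, D, Q, t)`: the subset-minimal contingency sets for `t` w.r.t. `Q`. -/
def CT {U : Type*} [DecidableEq U] (D : Finset U) (Q : Finset U → Prop) (t : U) :
    Set (Finset U) :=
  { s | s ⊆ D ∧ Q (D \ s) ∧ ¬ Q (D \ insert t s) ∧ ∀ s'' ⊂ s, Q (D \ insert t s'') }

/-! A set `E` with `D \ insert t s ⊆ E ⊆ D` falsifying `Q` cannot contain `t`: otherwise
`D \ s ⊆ E`, and monotonicity turns `Q (D \ s)` into `Q E`. Hence `E = D \ insert t s''` with
`s'' = s \ E ⊆ s`, and the minimality of `s` forces `s'' = s`. -/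

section

variable {U : Type*} [DecidableEq U]

theorem Finset.sdiff_subset_of_sdiff_insert_subset {D E s : Finset U} {t : U} (ht : t ∈ E)
    (hsub : D \ insert t s ⊆ E) : D \ s ⊆ E := by
  intro x hx
  by_cases hxt : x = t
  · exact hxt ▸ ht
  · exact hsub (by simp_all)

theorem Finset.eq_sdiff_insert_sdiff_of_sdiff_insert_subset {D E s : Finset U} {t : U}
    (hE : E ⊆ D) (ht : t ∉ E) (hsub : D \ insert t s ⊆ E) : E = D \ insert t (s \ E) := by
  ext x
  constructor
  · intro hx
    have : x ≠ t := fun h => ht (h ▸ hx)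
    simp_all [hE hx]
  · intro hx
    simp only [mem_sdiff, mem_insert, not_or, not_and, not_not] at hx
    by_cases hxs : x ∈ s
    · exact hx.2.2 hxs
    · exact hsub (by simp [hx.1, hx.2.1, hxs])

namespace CT

variable {D : Finset U} {Q : Finset U → Prop} {t : U} {s : Finset U}

theorem notMem_of_superset (hmono : Monotone Q) (hs : s ∈ CT D Q t) {E : Finset U}
    (hsub : D \ insert t s ⊆ E) (hQ : ¬ Q E) : t ∉ E := fun ht =>
  hQ (hmono (Finset.sdiff_subset_of_sdiff_insert_subset ht hsub) hs.2.1)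

theorem eq_of_superset (hmono : Monotone Q) (hs : s ∈ CT D Q t) {E : Finset U} (hE : E ⊆ D)
    (hsub : D \ insert t s ⊆ E) (hQ : ¬ Q E) : E = D \ insert t s := by
  have hrepr := Finset.eq_sdiff_insert_sdiff_of_sdiff_insert_subset hE
    (notMem_of_superset hmono hs hsub hQ) hsub
  rcases (Finset.sdiff_subset : s \ E ⊆ s).eq_or_ssubset with hall | hsmaller
  · rwa [hall] at hrepr
  · exact absurd (hrepr ▸ hs.2.2.2 _ hsmaller) hQ

end CT

end

theorem cause_and_CT_give_SRepair_general
    {U : Type*} [DecidableEq U] (D : Finset U) (Q : Finset U → Prop)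
    (hmono : ∀ S S' : Finset U, S ⊆ S' → Q S → Q S')
    (t : U)
    (s : Finset U) (hs : s ∈ CT D Q t) :
    IsSRepair D Q (D \ insert t s) :=
  ⟨Finset.sdiff_subset, hs.2.2.1, fun _ hE hQ hsub =>
    CT.eq_of_superset (fun _ _ h => hmono _ _ h) hs hE hsub hQ⟩

/-- Removing an actual cause together with one of its subset-minimal contingency sets
yields an S-repair. -/
theorem cause_and_CT_give_SRepair
    {U : Type*} [DecidableEq U] (D : Finset U) (Q : Finset U → Prop)
    (hmono : ∀ S S' : Finset U, S ⊆ S' → Q S → Q S')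
    (hempty : ¬ Q ∅)
    (t : U) (htc : IsCause D D Q t)
    (s : Finset U) (hs : s ∈ CT D Q t) :
    IsSRepair D Q (D \ insert t s) :=
  cause_and_CT_give_SRepair_general D Q hmono t s hs
end

section
/- Let D be a database instance in which all tuples are endogenous, Q a monotone Boolean query with ¬Q(∅), and suppose D ⊨ Q. Then D′ ⊆ D is an S-repair of D w.r.t. κ(Q) if and only if D′ ⊊ D and for every t ∈ D∖D′: t ∈ CS(D, ∅, Q) and D∖(D′ ∪ {t}) ∈ CT(D, D, Q, t). (Proposition 4(b).) -/
/-!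
By monotonicity, a `Q`-free `D' ⊆ D` is maximal iff adding any single tuple `t ∈ D ∖ D'` makes
`Q` true. For such `t`, the set `s = D ∖ (D' ∪ {t})` has `D ∖ s = D' ∪ {t}` and
`D ∖ (s ∪ {t}) = D'`, so it is a contingency set for `t`; it is minimal because removing any
smaller `s'' ⊊ s` together with `t` leaves a proper superset of `D'`, on which `Q` holds.
-/

section

variable {U : Type*} [DecidableEq U] {D D' : Finset U} {Q : Finset U → Prop} {t : U}

theorem Finset.sdiff_insert_sdiff_insert_eq (hD' : insert t D' ⊆ D) (ht : t ∉ D') :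
    D \ insert t (D \ insert t D') = D' := by
  rw [Finset.sdiff_insert, Finset.sdiff_sdiff_eq_self hD', Finset.erase_insert ht]

theorem Finset.insert_subset_sdiff_insert {s'' : Finset U} {x : U} (hsub : D' ⊆ D)
    (htD' : t ∉ D') (hs'' : s'' ⊆ D \ insert t D') (hx : x ∈ D \ insert t D') (hxs'' : x ∉ s'') :
    insert x D' ⊆ D \ insert t s'' := by
  simp only [Finset.subset_iff, Finset.mem_insert, Finset.mem_sdiff] at *
  grind

theorem isSRepair_iff_forall_insert (hmono : ∀ S S' : Finset U, S ⊆ S' → Q S → Q S') :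
    IsSRepair D Q D' ↔ D' ⊆ D ∧ ¬ Q D' ∧ ∀ t ∈ D \ D', Q (insert t D') := by
  refine and_congr_right fun hsub => and_congr_right fun _ => ⟨fun hmax t ht => ?_, ?_⟩
  · obtain ⟨htD, htD'⟩ := Finset.mem_sdiff.1 ht
    by_contra hQ
    exact htD' (hmax _ (Finset.insert_subset htD hsub) hQ (Finset.subset_insert t D') ▸
      Finset.mem_insert_self t D')
  · intro hins D'' hD'' hQ'' hD'D''
    by_contra hne
    obtain ⟨t, htD'', htD'⟩ :=
      Finset.exists_of_ssubset (Finset.ssubset_iff_subset_ne.2 ⟨hD'D'', Ne.symm hne⟩)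
    exact hQ'' (hmono _ _ (Finset.insert_subset htD'' hD'D'')
      (hins t (Finset.mem_sdiff.2 ⟨hD'' htD'', htD'⟩)))

theorem isCause_of_mem_CT {s : Finset U} (htD : t ∈ D) (hs : s ∈ CT D Q t) :
    IsCause D D Q t := by
  obtain ⟨hsD, hQs, hnQs, -⟩ := hs
  have hts : t ∉ s := fun hts => hnQs (by rwa [Finset.insert_eq_of_mem hts])
  exact ⟨htD, s, hsD, hts, hQs, hnQs⟩

theorem sdiff_insert_mem_CT (hmono : ∀ S S' : Finset U, S ⊆ S' → Q S → Q S')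
    (hsub : D' ⊆ D) (hnQ : ¬ Q D') (hins : ∀ x ∈ D \ D', Q (insert x D'))
    (ht : t ∈ D \ D') : D \ insert t D' ∈ CT D Q t := by
  obtain ⟨htD, htD'⟩ := Finset.mem_sdiff.1 ht
  have htsub : insert t D' ⊆ D := Finset.insert_subset htD hsub
  refine ⟨Finset.sdiff_subset, ?_, ?_, fun s'' hs'' => ?_⟩
  · rw [Finset.sdiff_sdiff_eq_self htsub]
    exact hins t ht
  · rwa [Finset.sdiff_insert_sdiff_insert_eq htsub htD']
  · obtain ⟨x, hxs, hxs''⟩ := Finset.exists_of_ssubset hs''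
    have hxD' : x ∈ D \ D' := Finset.sdiff_subset_sdiff subset_rfl (Finset.subset_insert t D') hxs
    exact hmono _ _ (Finset.insert_subset_sdiff_insert hsub htD' hs''.subset hxs hxs'') (hins x hxD')

end

theorem SRepair_iff_causes_general
    {U : Type*} [DecidableEq U] (D : Finset U) (Q : Finset U → Prop)
    (hmono : ∀ S S' : Finset U, S ⊆ S' → Q S → Q S')
    (hQD : Q D)
    (D' : Finset U) (hsub : D' ⊆ D) :
    IsSRepair D Q D' ↔
      (D' ⊂ D ∧ ∀ t ∈ D \ D', IsCause D D Q t ∧ (D \ insert t D') ∈ CT D Q t) := by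
  rw [isSRepair_iff_forall_insert hmono]
  constructor
  · rintro ⟨-, hnQ, hins⟩
    refine ⟨Finset.ssubset_iff_subset_ne.2 ⟨hsub, fun h => hnQ (h ▸ hQD)⟩, fun t ht => ?_⟩
    have hCT := sdiff_insert_mem_CT hmono hsub hnQ hins ht
    exact ⟨isCause_of_mem_CT (Finset.mem_sdiff.1 ht).1 hCT, hCT⟩
  · rintro ⟨hlt, hcauses⟩
    obtain ⟨t₀, ht₀D, ht₀D'⟩ := Finset.exists_of_ssubset hlt
    have hnQ := (hcauses t₀ (Finset.mem_sdiff.2 ⟨ht₀D, ht₀D'⟩)).2.2.2.1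
    rw [Finset.sdiff_insert_sdiff_insert_eq (Finset.insert_subset ht₀D hsub) ht₀D'] at hnQ
    refine ⟨hsub, hnQ, fun t ht => ?_⟩
    have hQ := (hcauses t ht).2.2.1
    rwa [Finset.sdiff_sdiff_eq_self (Finset.insert_subset (Finset.mem_sdiff.1 ht).1 hsub)] at hQ

/-- Proposition 4(b): with all tuples endogenous and `D ⊨ Q`, `D' ⊆ D` is an S-repair iff
`D' ⊊ D` and every `t ∈ D ∖ D'` is an actual cause for `Q` with
`D ∖ (D' ∪ {t}) ∈ CT(D, D, Q, t)`. -/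
theorem SRepair_iff_causes
    {U : Type*} [DecidableEq U] (D : Finset U) (Q : Finset U → Prop)
    (hmono : ∀ S S' : Finset U, S ⊆ S' → Q S → Q S')
    (hempty : ¬ Q ∅) (hQD : Q D)
    (D' : Finset U) (hsub : D' ⊆ D) :
    IsSRepair D Q D' ↔
      (D' ⊂ D ∧ ∀ t ∈ D \ D', IsCause D D Q t ∧ (D \ insert t D') ∈ CT D Q t) :=
  SRepair_iff_causes_general D Q hmono hQD D' hsub
end

section
/- Let D be a database instance in which all tuples are endogenous, Q a monotone Boolean query with ¬Q(∅), and A ∈ U a tuple (a ground atomic query). Then A is consistently true (i.e., A ∈ D′ for every S-repair D′ of D w.r.t. κ(Q)) if and only if A ∈ D ∖ CS(D, ∅, Q). (Proposition 6.) -/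
/-- Proposition 6: a ground atomic query `A` is consistently true (belongs to every
S-repair of `D` w.r.t. `κ(Q)`) iff `A ∈ D ∖ CS(D, ∅, Q)`. -/
theorem consistently_true_iff_not_cause
    {U : Type*} [DecidableEq U] (D : Finset U) (Q : Finset U → Prop)
    (hmono : ∀ S S' : Finset U, S ⊆ S' → Q S → Q S')
    (hempty : ¬ Q ∅) (A : U) :
    (∀ D', IsSRepair D Q D' → A ∈ D') ↔ (A ∈ D ∧ ¬ IsCause D D Q A) := by
  classical
  -- every subset of D not satisfying Q extends to an S-repair
  have hext : ∀ S ⊆ D, ¬ Q S → ∃ D', IsSRepair D Q D' ∧ S ⊆ D' := by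
    intro S hSD hQS
    set 𝒮 : Finset (Finset U) := D.powerset.filter (fun T => S ⊆ T ∧ ¬ Q T) with h𝒮
    have hne : 𝒮.Nonempty := ⟨S, by simp [h𝒮, hSD, hQS]⟩
    obtain ⟨D', hD'mem, hmax⟩ := 𝒮.exists_max_image Finset.card hne
    simp only [h𝒮, Finset.mem_filter, Finset.mem_powerset] at hD'mem
    obtain ⟨hD'D, hSD', hQD'⟩ := hD'mem
    refine ⟨D', ⟨hD'D, hQD', ?_⟩, hSD'⟩
    intro D'' hD''D hQD'' hsub
    have hmem : D'' ∈ 𝒮 := by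
      simp [h𝒮, hD''D, hQD'', hSD'.trans hsub]
    exact (Finset.eq_of_subset_of_card_le hsub (hmax _ hmem)).symm
  constructor
  · intro hall
    obtain ⟨D0, hD0, _⟩ := hext ∅ (Finset.empty_subset D) hempty
    have hAD : A ∈ D := hD0.1 (hall _ hD0)
    refine ⟨hAD, ?_⟩
    rintro ⟨-, Γ, hΓD, hAΓ, hQ1, hQ2⟩
    obtain ⟨D', hD', hsub⟩ := hext (D \ insert A Γ) (Finset.sdiff_subset) hQ2
    have hAD' : A ∈ D' := hall _ hD'
    have : D \ Γ ⊆ D' := by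
      intro x hx
      rw [Finset.mem_sdiff] at hx
      by_cases hxA : x = A
      · exact hxA ▸ hAD'
      · exact hsub (Finset.mem_sdiff.mpr ⟨hx.1, by simp [hxA, hx.2]⟩)
    exact hD'.2.1 (hmono _ _ this hQ1)
  · rintro ⟨hAD, hnc⟩ D' ⟨hD'D, hQD', hmax⟩
    by_contra hA
    apply hnc
    have heq : D \ (D \ insert A D') = insert A D' := by
      rw [Finset.sdiff_sdiff_self_left,
        Finset.inter_eq_right.mpr (Finset.insert_subset hAD hD'D)]
    refine ⟨hAD, D \ insert A D', Finset.sdiff_subset, by simp, ?_, ?_⟩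
    · rw [heq]
      by_contra hQi
      have := hmax (insert A D') (Finset.insert_subset hAD hD'D) hQi
        (Finset.subset_insert _ _)
      exact hA (this ▸ Finset.mem_insert_self A D')
    · rw [Finset.sdiff_insert, heq, Finset.erase_insert hA]
      exact hQD'
end

section
/- Let D = Dⁿ ∪ Dˣ be a database instance, Q a monotone Boolean query with ¬Q(∅), and suppose D ⊨ Q. A tuple t ∈ Dⁿ is an actual cause for Q if and only if 𝒟(M, t) ≠ ∅, i.e., there exists a subset-minimal diagnosis for the diagnosis problem M associated with Q that contains t. (Proposition on actual causes and diagnoses.) -/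
/-- A diagnosis for the diagnosis problem `M` associated with `Q` on `D` (endogenous
part `Dn`): a set `Δ ⊆ Dn` of tuples whose abnormality restores consistency, i.e.
`D ∖ Δ ⊭ Q`. -/
def IsDiagnosis {U : Type*} [DecidableEq U] (D Dn : Finset U) (Q : Finset U → Prop)
    (Δ : Finset U) : Prop :=
  Δ ⊆ Dn ∧ ¬ Q (D \ Δ)

/-- A subset-minimal diagnosis. -/
def IsMinDiagnosis {U : Type*} [DecidableEq U] (D Dn : Finset U) (Q : Finset U → Prop)
    (Δ : Finset U) : Prop :=
  IsDiagnosis D Dn Q Δ ∧ ∀ Δ' ⊂ Δ, ¬ IsDiagnosis D Dn Q Δ'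

section Diagnosis

variable {U : Type*} [DecidableEq U] {D Dn : Finset U} {Q : Finset U → Prop}

theorem isMinDiagnosis_iff_minimal {Δ : Finset U} :
    IsMinDiagnosis D Dn Q Δ ↔ Minimal (IsDiagnosis D Dn Q) Δ :=
  minimal_iff_forall_lt.symm

theorem IsDiagnosis.exists_isMinDiagnosis_subset {Δ : Finset U} (h : IsDiagnosis D Dn Q Δ) :
    ∃ Δ' ⊆ Δ, IsMinDiagnosis D Dn Q Δ' := by
  obtain ⟨Δ', hsub, hmin⟩ := exists_minimal_le_of_wellFoundedLT _ Δ h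
  exact ⟨Δ', hsub, isMinDiagnosis_iff_minimal.mpr hmin⟩

theorem IsDiagnosis.mono (hmono : ∀ S S' : Finset U, S ⊆ S' → Q S → Q S')
    {Δ Δ' : Finset U} (h : IsDiagnosis D Dn Q Δ) (hsub : Δ ⊆ Δ') (hΔ' : Δ' ⊆ Dn) :
    IsDiagnosis D Dn Q Δ' :=
  ⟨hΔ', fun hQ ↦ h.2 (hmono _ _ (Finset.sdiff_subset_sdiff subset_rfl hsub) hQ)⟩

/-- A minimal diagnosis below `insert t Γ` must contain `t`, since otherwise `Γ` itself would be
a diagnosis, contradicting `D ∖ Γ ⊨ Q`. -/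
theorem IsCause.exists_isMinDiagnosis_mem (hmono : ∀ S S' : Finset U, S ⊆ S' → Q S → Q S')
    {t : U} (h : IsCause D Dn Q t) : ∃ Δ, IsMinDiagnosis D Dn Q Δ ∧ t ∈ Δ := by
  obtain ⟨ht, Γ, hΓ, -, hQΓ, hnQ⟩ := h
  have hdiag : IsDiagnosis D Dn Q (insert t Γ) := ⟨Finset.insert_subset ht hΓ, hnQ⟩
  obtain ⟨Δ, hΔsub, hΔmin⟩ := hdiag.exists_isMinDiagnosis_subset
  refine ⟨Δ, hΔmin, by_contra fun htΔ ↦ ?_⟩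
  have hΔΓ : Δ ⊆ Γ := (Finset.subset_insert_iff_of_notMem htΔ).mp hΔsub
  exact (hΔmin.1.mono hmono hΔΓ hΓ).2 hQΓ

theorem IsMinDiagnosis.isCause_of_mem {Δ : Finset U} {t : U} (h : IsMinDiagnosis D Dn Q Δ)
    (ht : t ∈ Δ) : IsCause D Dn Q t := by
  have hΓ : Δ.erase t ⊆ Dn := (Finset.erase_subset t Δ).trans h.1.1
  have hQ : Q (D \ Δ.erase t) :=
    not_not.mp fun hnQ ↦ h.2 _ (Finset.erase_ssubset ht) ⟨hΓ, hnQ⟩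
  refine ⟨h.1.1 ht, Δ.erase t, hΓ, Finset.notMem_erase t Δ, hQ, ?_⟩
  rw [Finset.insert_erase ht]
  exact h.1.2

end Diagnosis

theorem cause_iff_minimal_diagnosis_general
    {U : Type*} [DecidableEq U] (D Dn : Finset U) (Q : Finset U → Prop)
    (hmono : ∀ S S' : Finset U, S ⊆ S' → Q S → Q S')
    (t : U) :
    IsCause D Dn Q t ↔ ∃ Δ, IsMinDiagnosis D Dn Q Δ ∧ t ∈ Δ :=
  ⟨fun h ↦ h.exists_isMinDiagnosis_mem hmono,
    fun ⟨_, hΔ, ht⟩ ↦ hΔ.isCause_of_mem ht⟩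

/-- A tuple `t ∈ Dⁿ` is an actual cause for `Q` iff `𝒟(M, t) ≠ ∅`, i.e. some
subset-minimal diagnosis contains `t`. -/
theorem cause_iff_minimal_diagnosis
    {U : Type*} [DecidableEq U] (D Dn Dx : Finset U) (Q : Finset U → Prop)
    (hD : D = Dn ∪ Dx) (hdisj : Disjoint Dn Dx)
    (hmono : ∀ S S' : Finset U, S ⊆ S' → Q S → Q S')
    (hempty : ¬ Q ∅) (hQD : Q D)
    (t : U) (ht : t ∈ Dn) :
    IsCause D Dn Q t ↔ ∃ Δ, IsMinDiagnosis D Dn Q Δ ∧ t ∈ Δ :=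
  cause_iff_minimal_diagnosis_general D Dn Q hmono t
end

section
/- Let D be a database instance in which all tuples are endogenous, and let Σ be a finite set of denial constraints with associated monotone violation queries V^ψ (each with ¬V^ψ(∅)). If D′ is an S-repair of D w.r.t. Σ, then for every ψ ∈ Σ that is violated by D (i.e., D ⊨ V^ψ), the set D∖D′ contains an actual cause for V^ψ, i.e., (D∖D′) ∩ CS(D, ∅, V^ψ) ≠ ∅. Consequently D∖D′ is a hitting set of the collection { CS(D, ∅, V^ψ) : ψ ∈ Σ, D ⊨ V^ψ }. -/
/-- `D'` is an S-repair of `D` w.r.t. a finite set of denial constraints, given by their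
violation queries `V i` for `i` in the index set `Sig`. -/
def IsSRepairSet {U : Type*} [DecidableEq U] {ι : Type*} (D : Finset U) (Sig : Finset ι)
    (V : ι → Finset U → Prop) (D' : Finset U) : Prop :=
  D' ⊆ D ∧ (∀ i ∈ Sig, ¬ V i D') ∧
    ∀ D'' ⊆ D, (∀ i ∈ Sig, ¬ V i D'') → D' ⊆ D'' → D'' = D'

/-! Take a `⊆`-minimal `S` with `D' ⊆ S ⊆ D` on which the violation query holds; it exists because
`D` is such a set, and `S ≠ D'` because `D'` is consistent. Any `t ∈ S \ D'` is then an actual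
cause, with contingency set `D \ S`: removing it leaves `S`, where the query holds, while removing
`t` as well leaves `S.erase t`, where it fails by minimality. -/

open Finset

section

variable {U : Type*} [DecidableEq U]

theorem isCause_of_not_erase {D S : Finset U} {Q : Finset U → Prop} {t : U} (hSD : S ⊆ D)
    (htS : t ∈ S) (hS : Q S) (hSt : ¬ Q (S.erase t)) : IsCause D D Q t := by
  refine ⟨hSD htS, D \ S, sdiff_subset, fun ht => (mem_sdiff.1 ht).2 htS, ?_, ?_⟩
  · rwa [Finset.sdiff_sdiff_eq_self hSD]
  · rwa [sdiff_insert, Finset.sdiff_sdiff_eq_self hSD]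

theorem exists_mem_sdiff_isCause {D D' : Finset U} {Q : Finset U → Prop} (hD'D : D' ⊆ D)
    (hD' : ¬ Q D') (hD : Q D) : ∃ t ∈ D \ D', IsCause D D Q t := by
  obtain ⟨S, hSD, ⟨hD'S, hS⟩, hmin⟩ :=
    exists_minimal_le_of_wellFoundedLT (fun S => D' ⊆ S ∧ Q S) D ⟨hD'D, hD⟩
  have hSD' : ¬ S ⊆ D' := fun h => hD' (h.antisymm hD'S ▸ hS)
  obtain ⟨t, htS, htD'⟩ := not_subset.1 hSD'
  refine ⟨t, mem_sdiff.2 ⟨hSD htS, htD'⟩, isCause_of_not_erase hSD htS hS fun hSt => ?_⟩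
  have hD'St : D' ⊆ S.erase t := fun x hx => mem_erase.2 ⟨ne_of_mem_of_not_mem hx htD', hD'S hx⟩
  exact notMem_erase t S (hmin ⟨hD'St, hSt⟩ (erase_subset t S) htS)

end

theorem SRepair_difference_hits_causes_general
    {U : Type*} [DecidableEq U] {ι : Type*} (D : Finset U) (Sig : Finset ι)
    (V : ι → Finset U → Prop)
    (D' : Finset U) (hrep : IsSRepairSet D Sig V D') :
    (∀ i ∈ Sig, V i D → ∃ t ∈ D \ D', IsCause D D (V i) t) ∧
    (∀ C ∈ { C : Set U | ∃ i ∈ Sig, V i D ∧ C = { t | IsCause D D (V i) t } },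
      ∃ x ∈ C, x ∈ D \ D') := by
  obtain ⟨hD'D, hD'sat, -⟩ := hrep
  have hits : ∀ i ∈ Sig, V i D → ∃ t ∈ D \ D', IsCause D D (V i) t :=
    fun i hi hD => exists_mem_sdiff_isCause hD'D (hD'sat i hi) hD
  refine ⟨hits, ?_⟩
  rintro C ⟨i, hi, hD, rfl⟩
  obtain ⟨t, htD, htC⟩ := hits i hi hD
  exact ⟨t, htC, htD⟩

/-- If `D'` is an S-repair of `D` w.r.t. a set `Σ` of denial constraints, then for every
violated constraint `ψ ∈ Σ` (i.e. `D ⊨ V^ψ`), the difference `D ∖ D'` contains an actual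
cause for `V^ψ`; consequently `D ∖ D'` is a hitting set of the collection
`{ CS(D, ∅, V^ψ) : ψ ∈ Σ, D ⊨ V^ψ }`. -/
theorem SRepair_difference_hits_causes
    {U : Type*} [DecidableEq U] {ι : Type*} (D : Finset U) (Sig : Finset ι)
    (V : ι → Finset U → Prop)
    (hmono : ∀ i ∈ Sig, ∀ S S' : Finset U, S ⊆ S' → V i S → V i S')
    (hempty : ∀ i ∈ Sig, ¬ V i ∅)
    (D' : Finset U) (hrep : IsSRepairSet D Sig V D') :
    (∀ i ∈ Sig, V i D → ∃ t ∈ D \ D', IsCause D D (V i) t) ∧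
    (∀ C ∈ { C : Set U | ∃ i ∈ Sig, V i D ∧ C = { t | IsCause D D (V i) t } },
      ∃ x ∈ C, x ∈ D \ D') :=
  SRepair_difference_hits_causes_general D Sig V D' hrep
end

section
/- Let D be a database instance in which all tuples are endogenous, Q a monotone Boolean query with ¬Q(∅), and t ∈ D an actual cause for Q. Then the minimum cardinality of a subset-minimal diagnosis for the diagnosis problem M associated with Q that contains t equals 1 + m, where m is the minimum cardinality of a contingency set for t; in particular, for any minimum-cardinality contingency set Γ for t, the set Γ ∪ {t} is a subset-minimal diagnosis containing t. -/
def IsContingency {U : Type*} [DecidableEq U] (D : Finset U) (Q : Finset U → Prop) (t : U)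
    (Γ : Finset U) : Prop :=
  Γ ⊆ D ∧ t ∉ Γ ∧ Q (D \ Γ) ∧ ¬ Q (D \ insert t Γ)

section Diagnosis

variable {U : Type*} [DecidableEq U] {D : Finset U} {Q : Finset U → Prop} {t : U}
  {Γ Δ : Finset U}

theorem IsMinDiagnosis.isContingency_erase (hΔ : IsMinDiagnosis D D Q Δ) (ht : t ∈ Δ) :
    IsContingency D Q t (Δ.erase t) := by
  obtain ⟨⟨hΔD, hΔQ⟩, hΔmin⟩ := hΔ
  refine ⟨(Δ.erase_subset t).trans hΔD, Δ.notMem_erase t, ?_, by rwa [Finset.insert_erase ht]⟩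
  by_contra hQ
  exact hΔmin _ (Finset.erase_ssubset ht) ⟨(Δ.erase_subset t).trans hΔD, hQ⟩

theorem mem_of_isDiagnosis_of_subset_insert (hmono : Monotone Q) (hΓ : Q (D \ Γ))
    (hΔ : IsDiagnosis D D Q Δ) (hsub : Δ ⊆ insert t Γ) : t ∈ Δ := by
  by_contra ht
  have hΔΓ : Δ ⊆ Γ := by rwa [Finset.subset_insert_iff, Finset.erase_eq_of_notMem ht] at hsub
  exact hΔ.2 (hmono (sdiff_le_sdiff_left hΔΓ) hΓ)

theorem isContingency_erase_of_isDiagnosis_of_subset_insert (hmono : Monotone Q)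
    (hΓ : Q (D \ Γ)) (hΔ : IsDiagnosis D D Q Δ) (hsub : Δ ⊆ insert t Γ) :
    IsContingency D Q t (Δ.erase t) := by
  have ht := mem_of_isDiagnosis_of_subset_insert hmono hΓ hΔ hsub
  refine ⟨(Δ.erase_subset t).trans hΔ.1, Δ.notMem_erase t, ?_, ?_⟩
  · exact hmono (sdiff_le_sdiff_left (Finset.subset_insert_iff.mp hsub)) hΓ
  · rw [Finset.insert_erase ht]
    exact hΔ.2

theorem IsContingency.isMinDiagnosis_insert (hmono : Monotone Q) (ht : t ∈ D)
    (hΓ : IsContingency D Q t Γ) (hmin : ∀ Γ', IsContingency D Q t Γ' → Γ.card ≤ Γ'.card) :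
    IsMinDiagnosis D D Q (insert t Γ) := by
  refine ⟨⟨Finset.insert_subset ht hΓ.1, hΓ.2.2.2⟩, fun Δ hΔ hΔdiag => ?_⟩
  have hΔt := mem_of_isDiagnosis_of_subset_insert hmono hΓ.2.2.1 hΔdiag hΔ.subset
  have hcard := hmin _
    (isContingency_erase_of_isDiagnosis_of_subset_insert hmono hΓ.2.2.1 hΔdiag hΔ.subset)
  have hlt := Finset.card_lt_card hΔ
  rw [Finset.card_insert_of_notMem hΓ.2.1, ← Finset.card_erase_add_one hΔt] at hlt
  omega

end Diagnosis

theorem min_diagnosis_card_eq_one_plus_min_contingency_general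
    {U : Type*} [DecidableEq U] (D : Finset U) (Q : Finset U → Prop)
    (hmono : ∀ S S' : Finset U, S ⊆ S' → Q S → Q S')
    (t : U) (ht : t ∈ D)
    (Γ : Finset U) (hΓsub : Γ ⊆ D) (htΓ : t ∉ Γ)
    (hQ1 : Q (D \ Γ)) (hQ2 : ¬ Q (D \ insert t Γ))
    (hmin : ∀ Γ' ⊆ D, t ∉ Γ' → Q (D \ Γ') → ¬ Q (D \ insert t Γ') → Γ.card ≤ Γ'.card) :
    IsMinDiagnosis D D Q (insert t Γ) ∧ (insert t Γ).card = 1 + Γ.card ∧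
      ∀ Δ, IsMinDiagnosis D D Q Δ → t ∈ Δ → 1 + Γ.card ≤ Δ.card := by
  have hmono' : Monotone Q := fun S S' h => hmono S S' h
  have hΓ : IsContingency D Q t Γ := ⟨hΓsub, htΓ, hQ1, hQ2⟩
  have hmin' : ∀ Γ', IsContingency D Q t Γ' → Γ.card ≤ Γ'.card :=
    fun Γ' ⟨h₁, h₂, h₃, h₄⟩ => hmin Γ' h₁ h₂ h₃ h₄
  refine ⟨hΓ.isMinDiagnosis_insert hmono' ht hmin',
    by rw [Finset.card_insert_of_notMem htΓ, add_comm], fun Δ hΔ htΔ => ?_⟩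
  rw [add_comm, ← Finset.card_erase_add_one htΔ]
  exact Nat.add_le_add_right (hmin' _ (hΔ.isContingency_erase htΔ)) 1

/-- If `t` is an actual cause for `Q` in `D` (all tuples endogenous) with a
minimum-cardinality contingency set `Γ` (of size `m`), then `Γ ∪ {t}` is a
subset-minimal diagnosis containing `t` of cardinality `1 + m`, and every
subset-minimal diagnosis containing `t` has cardinality at least `1 + m`. -/
theorem min_diagnosis_card_eq_one_plus_min_contingency
    {U : Type*} [DecidableEq U] (D : Finset U) (Q : Finset U → Prop)
    (hmono : ∀ S S' : Finset U, S ⊆ S' → Q S → Q S')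
    (hempty : ¬ Q ∅)
    (t : U) (ht : t ∈ D)
    (Γ : Finset U) (hΓsub : Γ ⊆ D) (htΓ : t ∉ Γ)
    (hQ1 : Q (D \ Γ)) (hQ2 : ¬ Q (D \ insert t Γ))
    (hmin : ∀ Γ' ⊆ D, t ∉ Γ' → Q (D \ Γ') → ¬ Q (D \ insert t Γ') → Γ.card ≤ Γ'.card) :
    IsMinDiagnosis D D Q (insert t Γ) ∧ (insert t Γ).card = 1 + Γ.card ∧
      ∀ Δ, IsMinDiagnosis D D Q Δ → t ∈ Δ → 1 + Γ.card ≤ Δ.card :=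
  min_diagnosis_card_eq_one_plus_min_contingency_general D Q hmono t ht Γ hΓsub htΓ hQ1 hQ2 hmin
end
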